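/- arXiv:2010.11503 — 2 statements merged into one kernel-verified Lean document; each statement's English description precedes it below -/
import Mathlib

section
/- Suppose in a directed graph G every edge that was 'redirected' originates in a vertex with no incoming edges. Then adding such redirected edges to a graph whose longest simple path has length ℓ yields a graph whose longest simple path has length at most ℓ + 1. -/
/-- If every simple path in `E` has at most `ℓ` vertices, and every additional
('redirected') edge in `E'` originates in a vertex with no incoming edges in `E ∪ E'`,
then every simple path in `E ∪ E'` has at most `ℓ + 1` vertices. -/
theorem stmt13 {V : Type*} (ℓ : ℕ) (E E' : V → V → Prop)
    (hE : ∀ (m : ℕ) (p : Fin (m + 1) → V), Function.Injective p →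
        (∀ i : Fin m, E (p i.castSucc) (p i.succ)) → m + 1 ≤ ℓ)
    (hE' : ∀ u v : V, E' u v → ∀ w : V, ¬ E w u ∧ ¬ E' w u) :
    ∀ (m : ℕ) (p : Fin (m + 1) → V), Function.Injective p →
      (∀ i : Fin m, E (p i.castSucc) (p i.succ) ∨ E' (p i.castSucc) (p i.succ)) →
      m + 1 ≤ ℓ + 1 := by
  intro m p hinj hpath
  cases m with
  | zero => omega
  | succ n =>
    have key : n + 1 ≤ ℓ := by
      apply hE n (fun i => p i.succ)
      · intro a b hab
        exact Fin.succ_injective _ (hinj hab)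
      · intro i
        have h1 := hpath i.succ
        rw [← Fin.succ_castSucc] at h1
        rcases h1 with h | h
        · exact h
        · exfalso
          have h2 := hpath i.castSucc
          have h3 := hE' _ _ h (p i.castSucc.castSucc)
          rcases h2 with h2 | h2
          · exact h3.1 h2
          · exact h3.2 h2
    omega
end

section
/- Emptiness of a nondeterministic tree automaton over finite-arity trees is decidable, and if the automaton has s states then it accepts some tree iff it accepts some regular tree with at most s pairwise non-isomorphic subtrees. -/
/-- A nondeterministic tree automaton over `k`-ary `Ω`-labelled trees. -/
structure NTA (Q Ω : Type*) (k : ℕ) where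
  init : Q
  trans : Set (Q × Ω × List Q)
  arity : ∀ t ∈ trans, t.2.2.length ≤ k

/-- A run of `A` on the `k`-ary `Ω`-labelled tree `(T, τ)` exists: the tree is
prefix-closed with root `[]`, and there is a state assignment consistent with the
transition relation starting from the initial state. -/
def NTAAccepts {Q Ω : Type*} {k : ℕ} (A : NTA Q Ω k)
    (T : Set (List (Fin k))) (τ : List (Fin k) → Ω) : Prop :=
  [] ∈ T ∧ (∀ (l : List (Fin k)) (i : Fin k), l ++ [i] ∈ T → l ∈ T) ∧
  ∃ ρ : List (Fin k) → Q, ρ [] = A.init ∧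
    ∀ w ∈ T, ∃ (m : ℕ) (hm : m ≤ k),
      (∀ i : Fin k, (w ++ [i] ∈ T ↔ (i : ℕ) < m)) ∧
      (ρ w, τ w, List.ofFn fun i : Fin m => ρ (w ++ [Fin.castLE hm i])) ∈ A.trans

/-- The set of (ordered, labelled) subtrees of `(T, τ)`; for ordered trees,
isomorphism of subtrees coincides with equality of these data. -/
def subtrees {Ω : Type*} {k : ℕ} (T : Set (List (Fin k))) (τ : List (Fin k) → Ω) :
    Set ((List (Fin k) → Prop) × (List (Fin k) → Ω)) :=
  {x | ∃ v ∈ T, x = (fun w => v ++ w ∈ T, fun w => τ (v ++ w))}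

/-- State reached after reading a reversed path, using child-choice `c`. -/
def runAux {Q : Type*} {k : ℕ} (c : Q → Fin k → Q) (q0 : Q) : List (Fin k) → Q
  | [] => q0
  | i :: l => c (runAux c q0 l) i

/-- Membership predicate (on reversed paths) of the regular tree generated by `c`, `m`. -/
def okAux {Q : Type*} {k : ℕ} (c : Q → Fin k → Q) (m : Q → ℕ) (q0 : Q) :
    List (Fin k) → Prop
  | [] => True
  | i :: l => okAux c m q0 l ∧ (i : ℕ) < m (runAux c q0 l)

theorem runAux_append {Q : Type*} {k : ℕ} (c : Q → Fin k → Q) (q0 : Q)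
    (u l : List (Fin k)) : runAux c q0 (u ++ l) = runAux c (runAux c q0 l) u := by
  induction u with
  | nil => rfl
  | cons i u ih => simp [runAux, ih]

theorem okAux_append {Q : Type*} {k : ℕ} (c : Q → Fin k → Q) (m : Q → ℕ) (q0 : Q)
    (u l : List (Fin k)) :
    okAux c m q0 (u ++ l) ↔ okAux c m q0 l ∧ okAux c m (runAux c q0 l) u := by
  induction u with
  | nil => simp [okAux]
  | cons i u ih => simp [okAux, ih, runAux_append]; tauto

/-- Emptiness of a nondeterministic tree automaton is decidable; moreover the automaton
accepts some tree iff it accepts a regular tree with at most `|Q|` pairwise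
non-isomorphic subtrees. -/
theorem stmt17 {Q Ω : Type*} [Fintype Q] [Fintype Ω] (k : ℕ) (A : NTA Q Ω k) :
    Nonempty (Decidable (∃ (T : Set (List (Fin k))) (τ : List (Fin k) → Ω),
        NTAAccepts A T τ)) ∧
    ((∃ (T : Set (List (Fin k))) (τ : List (Fin k) → Ω), NTAAccepts A T τ) ↔
      ∃ (T : Set (List (Fin k))) (τ : List (Fin k) → Ω), NTAAccepts A T τ ∧
        (subtrees T τ).Finite ∧ (subtrees T τ).ncard ≤ Fintype.card Q) := by
  refine ⟨⟨Classical.dec _⟩, ?_, ?_⟩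
  · rintro ⟨T, τ, hroot, hpc, ρ, hρ0, hrun⟩
    -- For every state, choose a witness node and a transition (when the state is realized).
    have hch : ∀ q : Q, ∃ (v : List (Fin k)) (mq : ℕ), mq ≤ k ∧
        ((∃ u ∈ T, ρ u = q) → v ∈ T ∧ ρ v = q ∧
          (∀ i : Fin k, (v ++ [i] ∈ T ↔ (i : ℕ) < mq)) ∧
          ∀ hm : mq ≤ k,
            (q, τ v, List.ofFn fun i : Fin mq => ρ (v ++ [Fin.castLE hm i])) ∈ A.trans) := by
      intro q
      by_cases hq : ∃ u ∈ T, ρ u = q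
      · obtain ⟨u, huT, hu⟩ := hq
        obtain ⟨mq, hm, hiff, htr⟩ := hrun u huT
        exact ⟨u, mq, hm, fun _ => ⟨huT, hu, hiff,
          fun hm' => by rw [← hu]; exact htr⟩⟩
      · exact ⟨[], 0, Nat.zero_le _, fun h => absurd h hq⟩
    choose v m hm hgood using hch
    set c : Q → Fin k → Q := fun q i => ρ (v q ++ [i]) with hc
    set a : Q → Ω := fun q => τ (v q) with ha
    set q0 := A.init with hq0
    -- invariant: reachable nodes carry realized states
    have hinv : ∀ l : List (Fin k), okAux c m q0 l →
        ∃ u ∈ T, ρ u = runAux c q0 l := by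
      intro l hl
      induction l with
      | nil => exact ⟨[], hroot, hρ0⟩
      | cons i l ih =>
        obtain ⟨hl', hi⟩ := hl
        have hR := ih hl'
        obtain ⟨hvT, hvρ, hiff, -⟩ := hgood _ hR
        exact ⟨v (runAux c q0 l) ++ [i], (hiff i).2 hi, rfl⟩
    refine ⟨{w | okAux c m q0 w.reverse}, fun w => a (runAux c q0 w.reverse), ?_, ?_, ?_⟩
    · -- acceptance
      refine ⟨trivial, ?_, fun w => runAux c q0 w.reverse, rfl, ?_⟩
      · intro l i hl
        simp only [Set.mem_setOf_eq, List.reverse_append, List.reverse_singleton,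
          List.singleton_append] at hl ⊢
        exact hl.1
      · intro w hw
        have hR := hinv _ hw
        obtain ⟨hvT, hvρ, hiff, htr⟩ := hgood _ hR
        refine ⟨m (runAux c q0 w.reverse), hm _, ?_, ?_⟩
        · intro i
          simp only [Set.mem_setOf_eq, List.reverse_append, List.reverse_singleton,
            List.singleton_append, okAux]
          exact ⟨fun h => h.2, fun h => ⟨hw, h⟩⟩
        · have := htr (hm _)
          simpa only [List.reverse_append, List.reverse_singleton,
            List.singleton_append, runAux, hc, ha] using this
    · -- subtrees contained in range of G
      set G : Q → (List (Fin k) → Prop) × (List (Fin k) → Ω) :=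
        fun q => (fun w => okAux c m q w.reverse, fun w => a (runAux c q w.reverse))
        with hG
      have hsub : subtrees {w | okAux c m q0 w.reverse}
          (fun w => a (runAux c q0 w.reverse)) ⊆ Set.range G := by
        rintro x ⟨u, huT, rfl⟩
        refine ⟨runAux c q0 u.reverse, ?_⟩
        simp only [hG, Prod.mk.injEq]
        constructor
        · funext w
          apply propext
          simp only [Set.mem_setOf_eq, List.reverse_append, okAux_append]
          exact ⟨fun h => ⟨huT, h⟩, fun h => h.2⟩
        · funext w
          simp [List.reverse_append, runAux_append]
      exact (Set.finite_range G).subset hsub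
    · set G : Q → (List (Fin k) → Prop) × (List (Fin k) → Ω) :=
        fun q => (fun w => okAux c m q w.reverse, fun w => a (runAux c q w.reverse))
        with hG
      have hsub : subtrees {w | okAux c m q0 w.reverse}
          (fun w => a (runAux c q0 w.reverse)) ⊆ Set.range G := by
        rintro x ⟨u, huT, rfl⟩
        refine ⟨runAux c q0 u.reverse, ?_⟩
        simp only [hG, Prod.mk.injEq]
        constructor
        · funext w
          apply propext
          simp only [Set.mem_setOf_eq, List.reverse_append, okAux_append]
          exact ⟨fun h => ⟨huT, h⟩, fun h => h.2⟩
        · funext w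
          simp [List.reverse_append, runAux_append]
      calc (subtrees _ _).ncard ≤ (Set.range G).ncard :=
            Set.ncard_le_ncard hsub (Set.finite_range G)
        _ = (Set.univ.image G).ncard := by rw [Set.image_univ]
        _ ≤ (Set.univ : Set Q).ncard := Set.ncard_image_le Set.finite_univ
        _ = Fintype.card Q := by rw [Set.ncard_univ, Nat.card_eq_fintype_card]
  · rintro ⟨T, τ, h, -, -⟩
    exact ⟨T, τ, h⟩
end
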